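/- Let S be an inverse semigroup with a zero element 0 such that Z(S)× has at least two elements. Then diam(Γ(S)) = 3 if and only if Z(S)× \ Min(S×) ≠ ∅ and Ann(x) ∩ Ann(y) = {0} for some x, y ∈ Z(S)× \ Min(S×) with ω(x,y) ≠ {0}. -/

import Mathlib

namespace ZDG

variable {S : Type*} [Semigroup S]

/-- The natural partial order on an inverse semigroup: `a ≤ b` iff `a = e * b`
for some idempotent `e`. -/
def nle (a b : S) : Prop := ∃ e : S, e * e = e ∧ a = e * b

/-- `omg a b` is the set `ω(a,b)` of common lower bounds of `a` and `b` with respect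
to the natural partial order. -/
def omg (a b : S) : Set S := {c | nle c a ∧ nle c b}

lemma omg_comm (a b : S) : omg a b = omg b a := by
  ext c; exact and_comm

/-- `Zx z` is the set `Z(S)×` of nonzero zero-divisors of `S` (with zero element `z`). -/
def Zx (z : S) : Set S := {a | a ≠ z ∧ ∃ b : S, b ≠ z ∧ omg a b = {z}}

/-- The zero-divisor graph `Γ(S)`: vertices are the elements of `Z(S)×`, and two
distinct vertices `a`, `b` are adjacent iff `ω(a,b) = {z}`. -/
def ZDGraph (z : S) : SimpleGraph (Zx z) where
  Adj a b := (a : S) ≠ (b : S) ∧ omg (a : S) (b : S) = {z}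
  symm := by
    constructor; rintro a b ⟨h1, h2⟩
    exact ⟨fun h => h1 h.symm, (omg_comm (b : S) (a : S)).trans h2⟩
  loopless := by constructor; rintro a ⟨h1, -⟩; exact h1 rfl

/-- The set of minimal elements of `S \ {z}` with respect to the natural partial order. -/
def MinOf (z : S) : Set S := {x | x ≠ z ∧ ∀ y : S, y ≠ z → nle y x → y = x}

/-- The annihilator of `x`: the set of `y` with `ω(x,y) = {z}`. -/
def Ann (z : S) (x : S) : Set S := {y | omg x y = {z}}

end ZDG

open ZDG

section Aux

/- Generic graph lemmas. -/

lemma ZDGaux.three_le_length {V : Type*} {G : SimpleGraph V} {u v : V}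
    (hne : u ≠ v) (hadj : ¬G.Adj u v) (hcn : ∀ w, ¬(G.Adj u w ∧ G.Adj w v)) :
    ∀ p : G.Walk u v, 3 ≤ p.length := by
  intro p
  match p with
  | .nil => exact absurd rfl hne
  | .cons h .nil => exact absurd h hadj
  | .cons h (.cons h2 .nil) => exact absurd ⟨h, h2⟩ (hcn _)
  | .cons h (.cons h2 (.cons h3 q)) =>
      simp only [SimpleGraph.Walk.length_cons]; omega

lemma ZDGaux.three_le_edist {V : Type*} {G : SimpleGraph V} {u v : V}
    (hne : u ≠ v) (hadj : ¬G.Adj u v) (hcn : ∀ w, ¬(G.Adj u w ∧ G.Adj w v)) :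
    3 ≤ G.edist u v := by
  rw [SimpleGraph.edist]
  refine le_iInf fun p => ?_
  exact_mod_cast Nat.cast_le.mpr (ZDGaux.three_le_length hne hadj hcn p)

lemma ZDGaux.edist_le_two_of_cn {V : Type*} {G : SimpleGraph V} {u v w : V}
    (h1 : G.Adj u w) (h2 : G.Adj w v) : G.edist u v ≤ 2 := by
  have := SimpleGraph.edist_le
    (SimpleGraph.Walk.cons h1 (SimpleGraph.Walk.cons h2 SimpleGraph.Walk.nil))
  simpa using this

lemma ZDGaux.edist_le_three_of_walk {V : Type*} {G : SimpleGraph V} {u v a b : V}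
    (h1 : G.Adj u a) (h2 : G.Adj a b) (h3 : G.Adj b v) : G.edist u v ≤ 3 := by
  have := SimpleGraph.edist_le
    (SimpleGraph.Walk.cons h1 (SimpleGraph.Walk.cons h2
      (SimpleGraph.Walk.cons h3 SimpleGraph.Walk.nil)))
  simpa using this

/- Semigroup order lemmas. -/

variable {S : Type*} [Semigroup S]
  (hinv : ∀ a : S, ∃ b : S, a * b * a = a ∧ b * a * b = b)
  (hcomm : ∀ e f : S, e * e = e → f * f = f → e * f = f * e)
  {z : S} (hz : ∀ x : S, z * x = z ∧ x * z = z)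

include hz in
lemma ZDGaux.nle_z (a : S) : nle z a := ⟨z, (hz z).1, ((hz a).1).symm⟩

include hz in
lemma ZDGaux.nle_z_right {a : S} (h : nle a z) : a = z := by
  obtain ⟨e, -, rfl⟩ := h; exact (hz e).2

include hinv in
lemma ZDGaux.nle_refl (a : S) : nle a a := by
  obtain ⟨b, h1, h2⟩ := hinv a
  exact ⟨a * b, by rw [← mul_assoc, h1], h1.symm⟩

include hcomm in
lemma ZDGaux.nle_trans {a b c : S} (h1 : nle a b) (h2 : nle b c) : nle a c := by
  obtain ⟨e, he, rfl⟩ := h1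
  obtain ⟨f, hf, rfl⟩ := h2
  refine ⟨e * f, ?_, (mul_assoc e f c).symm⟩
  rw [mul_assoc e f (e * f), ← mul_assoc f e f, hcomm f e hf he, mul_assoc e f f, hf,
    ← mul_assoc, he]

include hz in
lemma ZDGaux.z_mem_omg (a b : S) : z ∈ omg a b := ⟨ZDGaux.nle_z hz a, ZDGaux.nle_z hz b⟩

include hz in
lemma ZDGaux.omg_eq_iff {a b : S} : omg a b = {z} ↔ ∀ c, nle c a → nle c b → c = z := by
  rw [Set.eq_singleton_iff_unique_mem]
  exact ⟨fun h c h1 h2 => h.2 c ⟨h1, h2⟩,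
    fun h => ⟨ZDGaux.z_mem_omg hz a b, fun c hc => h c hc.1 hc.2⟩⟩

include hz in
lemma ZDGaux.omg_ne_iff {a b : S} : omg a b ≠ {z} ↔ ∃ c, c ≠ z ∧ nle c a ∧ nle c b := by
  rw [Ne, ZDGaux.omg_eq_iff hz]
  push_neg
  exact ⟨fun ⟨c, h1, h2, h3⟩ => ⟨c, h3, h1, h2⟩, fun ⟨c, h3, h1, h2⟩ => ⟨c, h1, h2, h3⟩⟩

include hz in
lemma ZDGaux.omg_z (a : S) : omg a z = {z} :=
  (ZDGaux.omg_eq_iff hz).mpr fun _ _ h2 => ZDGaux.nle_z_right hz h2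

include hinv in
lemma ZDGaux.ne_of_omg_eq {x y : S} (hx : x ≠ z) (h : omg x y = {z}) : x ≠ y := by
  rintro rfl
  have hm : x ∈ omg x x := ⟨ZDGaux.nle_refl hinv x, ZDGaux.nle_refl hinv x⟩
  rw [h] at hm
  exact hx hm

include hinv hcomm hz in
/-- Every pair of vertices of the zero-divisor graph is at extended distance at most `3`. -/
lemma ZDGaux.edist_le_three (a b : Zx z) : (ZDGraph z).edist a b ≤ 3 := by
  by_cases hab : a = b
  · subst hab; simp
  have habS : (a : S) ≠ (b : S) := fun h => hab (Subtype.ext h)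
  by_cases h1 : omg (a : S) (b : S) = {z}
  · rw [SimpleGraph.edist_eq_one_iff_adj.mpr (show (ZDGraph z).Adj a b from ⟨habS, h1⟩)]
    norm_num
  obtain ⟨haz, a', ha'z, ha'⟩ := a.2
  obtain ⟨hbz, b', hb'z, hb'⟩ := b.2
  by_cases h2 : omg (a : S) b' = {z}
  · -- path a - b' - b
    have hb'Zx : b' ∈ Zx z := ⟨hb'z, b, hbz, (omg_comm b' (b : S)).trans hb'⟩
    have hadj1 : (ZDGraph z).Adj a ⟨b', hb'Zx⟩ := ⟨ZDGaux.ne_of_omg_eq hinv haz h2, h2⟩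
    have hadj2 : (ZDGraph z).Adj ⟨b', hb'Zx⟩ b :=
      ⟨(ZDGaux.ne_of_omg_eq hinv hbz hb').symm, (omg_comm b' (b : S)).trans hb'⟩
    exact le_trans (ZDGaux.edist_le_two_of_cn hadj1 hadj2) (by norm_num)
  by_cases h3 : omg a' (b : S) = {z}
  · -- path a - a' - b
    have ha'Zx : a' ∈ Zx z := ⟨ha'z, a, haz, (omg_comm a' (a : S)).trans ha'⟩
    have hadj1 : (ZDGraph z).Adj a ⟨a', ha'Zx⟩ := ⟨ZDGaux.ne_of_omg_eq hinv haz ha', ha'⟩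
    have hadj2 : (ZDGraph z).Adj ⟨a', ha'Zx⟩ b :=
      ⟨(ZDGaux.ne_of_omg_eq hinv hbz ((omg_comm (b : S) a').trans h3)).symm, h3⟩
    exact le_trans (ZDGaux.edist_le_two_of_cn hadj1 hadj2) (by norm_num)
  obtain ⟨u, huz, hua, hub'⟩ := (ZDGaux.omg_ne_iff hz).mp h2
  obtain ⟨v, hvz, hva', hvb⟩ := (ZDGaux.omg_ne_iff hz).mp h3
  have hav : omg (a : S) v = {z} := (ZDGaux.omg_eq_iff hz).mpr fun c hc1 hc2 => by
    have : c ∈ omg (a : S) a' := ⟨hc1, ZDGaux.nle_trans hcomm hc2 hva'⟩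
    rwa [ha'] at this
  have huv : omg u v = {z} := (ZDGaux.omg_eq_iff hz).mpr fun c hc1 hc2 => by
    have : c ∈ omg (a : S) a' :=
      ⟨ZDGaux.nle_trans hcomm hc1 hua, ZDGaux.nle_trans hcomm hc2 hva'⟩
    rwa [ha'] at this
  have hub : omg u (b : S) = {z} := (ZDGaux.omg_eq_iff hz).mpr fun c hc1 hc2 => by
    have : c ∈ omg (b : S) b' := ⟨hc2, ZDGaux.nle_trans hcomm hc1 hub'⟩
    rwa [hb'] at this
  have huZx : u ∈ Zx z := ⟨huz, v, hvz, huv⟩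
  have hvZx : v ∈ Zx z := ⟨hvz, u, huz, (omg_comm v u).trans huv⟩
  have hadj1 : (ZDGraph z).Adj a ⟨v, hvZx⟩ := ⟨ZDGaux.ne_of_omg_eq hinv haz hav, hav⟩
  have hadj2 : (ZDGraph z).Adj ⟨v, hvZx⟩ ⟨u, huZx⟩ :=
    ⟨(ZDGaux.ne_of_omg_eq hinv huz huv).symm, (omg_comm v u).trans huv⟩
  have hadj3 : (ZDGraph z).Adj ⟨u, huZx⟩ b := ⟨ZDGaux.ne_of_omg_eq hinv huz hub, hub⟩
  exact ZDGaux.edist_le_three_of_walk hadj1 hadj2 hadj3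

include hinv hcomm hz in
/-- If two vertices are at distance `3`, the first one is not minimal. -/
lemma ZDGaux.not_min_of_edist_eq_three {a b : Zx z}
    (h : (ZDGraph z).edist a b = 3) : (a : S) ∉ MinOf z := by
  rintro ⟨haz, hmin⟩
  have hne : a ≠ b := by
    rintro rfl
    rw [SimpleGraph.edist_self] at h
    norm_num at h
  have hnadj : ¬(ZDGraph z).Adj a b := fun hadj => by
    rw [SimpleGraph.edist_eq_one_iff_adj.mpr hadj] at h
    norm_num at h
  have homg : omg (a : S) (b : S) ≠ {z} :=
    fun he => hnadj ⟨fun hh => hne (Subtype.ext hh), he⟩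
  obtain ⟨c, hcz, hca, hcb⟩ := (ZDGaux.omg_ne_iff hz).mp homg
  have hab : nle (a : S) (b : S) := hmin c hcz hca ▸ hcb
  obtain ⟨hbz, w, hwz, hw⟩ := b.2
  have haw : omg (a : S) w = {z} := (ZDGaux.omg_eq_iff hz).mpr fun c' h1 h2 => by
    have : c' ∈ omg (b : S) w := ⟨ZDGaux.nle_trans hcomm h1 hab, h2⟩
    rwa [hw] at this
  have hwZx : w ∈ Zx z := ⟨hwz, a, haz, (omg_comm w (a : S)).trans haw⟩
  have h1 : (ZDGraph z).Adj a ⟨w, hwZx⟩ := ⟨ZDGaux.ne_of_omg_eq hinv haz haw, haw⟩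
  have h2 : (ZDGraph z).Adj ⟨w, hwZx⟩ b :=
    ⟨(ZDGaux.ne_of_omg_eq hinv hbz hw).symm, (omg_comm w (b : S)).trans hw⟩
  have hle := ZDGaux.edist_le_two_of_cn h1 h2
  rw [h] at hle
  norm_num at hle

end Aux

/-- `diam(Γ(S)) = 3` iff `Z(S)× \ Min(S×) ≠ ∅` and
`Ann(x) ∩ Ann(y) = {z}` for some `x, y ∈ Z(S)× \ Min(S×)` with `ω(x,y) ≠ {z}`. -/
theorem stmt6 {S : Type*} [Semigroup S] [Nontrivial S]
    (hinv : ∀ a : S, ∃ b : S, a * b * a = a ∧ b * a * b = b)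
    (hcomm : ∀ e f : S, e * e = e → f * f = f → e * f = f * e)
    (z : S) (hz : ∀ x : S, z * x = z ∧ x * z = z)
    (h2 : (Zx z).Nontrivial) :
    (ZDGraph z).ediam = 3 ↔
      (Zx z \ MinOf z).Nonempty ∧
        ∃ x ∈ Zx z \ MinOf z, ∃ y ∈ Zx z \ MinOf z,
          omg x y ≠ {z} ∧ Ann z x ∩ Ann z y = {z} := by
  constructor
  · intro h
    haveI : Nonempty (Zx z) := h2.nonempty.to_subtype
    obtain ⟨u, v, huv⟩ := SimpleGraph.exists_edist_eq_ediam_of_ne_top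
      (G := ZDGraph z) (by rw [h]; simp)
    rw [h] at huv
    have hu : (u : S) ∉ MinOf z := ZDGaux.not_min_of_edist_eq_three hinv hcomm hz huv
    have hv : (v : S) ∉ MinOf z := ZDGaux.not_min_of_edist_eq_three hinv hcomm hz
      (SimpleGraph.edist_comm.trans huv)
    have huvne : u ≠ v := by
      rintro rfl
      rw [SimpleGraph.edist_self] at huv
      norm_num at huv
    have hnadj : omg (u : S) (v : S) ≠ {z} := by
      intro he
      have : (ZDGraph z).edist u v = 1 :=
        SimpleGraph.edist_eq_one_iff_adj.mpr ⟨fun hh => huvne (Subtype.ext hh), he⟩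
      rw [huv] at this
      norm_num at this
    refine ⟨⟨u, u.2, hu⟩, u, ⟨u.2, hu⟩, v, ⟨v.2, hv⟩, hnadj, ?_⟩
    apply Set.eq_singleton_iff_unique_mem.mpr
    refine ⟨⟨ZDGaux.omg_z hz (u : S), ZDGaux.omg_z hz (v : S)⟩, ?_⟩
    rintro w ⟨hw1, hw2⟩
    by_contra hwz
    have hw1' : omg (u : S) w = {z} := hw1
    have hw2' : omg (v : S) w = {z} := hw2
    have hwZx : w ∈ Zx z := ⟨hwz, u, u.2.1, (omg_comm w (u : S)).trans hw1'⟩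
    have hadj1 : (ZDGraph z).Adj u ⟨w, hwZx⟩ := ⟨ZDGaux.ne_of_omg_eq hinv u.2.1 hw1', hw1'⟩
    have hadj2 : (ZDGraph z).Adj ⟨w, hwZx⟩ v :=
      ⟨(ZDGaux.ne_of_omg_eq hinv v.2.1 hw2').symm, (omg_comm w (v : S)).trans hw2'⟩
    have hle := ZDGaux.edist_le_two_of_cn hadj1 hadj2
    rw [huv] at hle
    norm_num at hle
  · rintro ⟨-, x, hx, y, hy, homg, hann⟩
    have hxZ := hx.1
    have hyZ := hy.1
    have hxy : x ≠ y := by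
      rintro rfl
      obtain ⟨-, b, hbz, hb⟩ := hxZ
      have hmem : b ∈ Ann z x ∩ Ann z x := ⟨hb, hb⟩
      rw [hann] at hmem
      exact hbz hmem
    apply le_antisymm
    · exact SimpleGraph.ediam_le_of_edist_le fun a b =>
        ZDGaux.edist_le_three hinv hcomm hz a b
    · refine le_trans ?_ (SimpleGraph.edist_le_ediam (u := ⟨x, hxZ⟩) (v := ⟨y, hyZ⟩))
      apply ZDGaux.three_le_edist
      · exact fun he => hxy (congrArg Subtype.val he)
      · rintro ⟨-, hadj⟩
        exact homg hadj
      · rintro w ⟨⟨-, hw1⟩, ⟨-, hw2⟩⟩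
        have hw1' : omg x (w : S) = {z} := hw1
        have hw2' : omg (w : S) y = {z} := hw2
        have hmem : (w : S) ∈ Ann z x ∩ Ann z y := ⟨hw1', (omg_comm y (w : S)).trans hw2'⟩
        rw [hann] at hmem
        exact w.2.1 hmem
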